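/- Let (h, ∘, ⟨,⟩) be an n-dimensional real 1-Hessian algebra with tr(L_X) = 0 for all X, and let D be a skew-symmetric derivation of (h, ∘). Define on g = h ⊕ RH the product: X•Y = X∘Y + ⟨X,Y⟩H, H•X = X + D(X), X•H = X for X,Y ∈ h, and H•H = H. Then (g, •) is a left symmetric algebra whose Koszul form satisfies B(X,Y) = (n+1)⟨X,Y⟩ for X,Y ∈ h, B(X,H) = 0, and B(H,H) = n+1; in particular B is positive definite. -/

import Mathlib

/-!
Left symmetry is checked componentwise: the `h`-component of the associator identity is the
`1`-Hessian associator identity plus the derivation rule for `D`, and the `H`-component is the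
first Hessian identity plus skew-symmetry of `D`.

For the Koszul form, the trace of `L_p` splits along `h ⊕ ℝH` into `tr (L_{p.1} + p.2 (1 + D))`
on `h` and `p.2` on `ℝH`. Left multiplications of `h` and the skew map `D` are trace-free, so
`tr L_p = (n + 1) p.2`, and since the `H`-component of `p • q` is `⟨p.1, q.1⟩ + p.2 q.2`, the
Koszul form is `n + 1` times the product inner product on `h × ℝ`.
-/

open RealInnerProductSpace

/-- Left multiplication of the product on `g = h ⊕ ℝH` defined by
`X•Y = X∘Y + ⟨X,Y⟩H`, `H•X = X + D X`, `X•H = X`, `H•H = H` (elements of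
`h × ℝ` are written `(X, a) = X + aH`), where `∘` is given by the bilinear
map `c`. -/
noncomputable def lmulCorTwo {h : Type*} [NormedAddCommGroup h]
    [InnerProductSpace ℝ h] (c : h →ₗ[ℝ] h →ₗ[ℝ] h) (D : h →ₗ[ℝ] h)
    (p : h × ℝ) : (h × ℝ) →ₗ[ℝ] (h × ℝ) :=
  LinearMap.prod
    ((c p.1) ∘ₗ LinearMap.fst ℝ h ℝ + (LinearMap.snd ℝ h ℝ).smulRight p.1
      + p.2 • ((LinearMap.id + D) ∘ₗ LinearMap.fst ℝ h ℝ))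
    ((innerₛₗ ℝ p.1) ∘ₗ LinearMap.fst ℝ h ℝ + p.2 • LinearMap.snd ℝ h ℝ)

namespace LinearMap

theorem trace_prod_eq_add {R M N : Type*} [CommRing R] [AddCommGroup M] [Module R M]
    [Module.Free R M] [Module.Finite R M] [AddCommGroup N] [Module R N] [Module.Free R N]
    [Module.Finite R N] (f : (M × N) →ₗ[R] (M × N)) :
    trace R (M × N) f = trace R M (fst R M N ∘ₗ f ∘ₗ inl R M N)
      + trace R N (snd R M N ∘ₗ f ∘ₗ inr R M N) := by
  have hf : f = inl R M N ∘ₗ (fst R M N ∘ₗ f) + inr R M N ∘ₗ (snd R M N ∘ₗ f) := by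
    ext <;> simp
  conv_lhs => rw [hf]
  rw [map_add, trace_comp_comm' (fst R M N ∘ₗ f), trace_comp_comm' (snd R M N ∘ₗ f)]
  rfl

theorem trace_eq_zero_of_inner_map_self_eq_zero {E : Type*} [NormedAddCommGroup E]
    [InnerProductSpace ℝ E] [FiniteDimensional ℝ E] {T : E →ₗ[ℝ] E}
    (hT : ∀ x, ⟪x, T x⟫ = 0) : trace ℝ E T = 0 := by
  rw [trace_eq_sum_inner T (stdOrthonormalBasis ℝ E)]
  exact Finset.sum_eq_zero fun i _ => hT _

end LinearMap

theorem inner_self_add_mul_self_pos {E : Type*} [NormedAddCommGroup E]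
    [InnerProductSpace ℝ E] {p : E × ℝ} (hp : p ≠ 0) : 0 < ⟪p.1, p.1⟫ + p.2 * p.2 := by
  rcases p with ⟨X, a⟩
  rw [real_inner_self_eq_norm_sq]
  rcases eq_or_ne X 0 with rfl | hX
  · have ha : a ≠ 0 := by simpa using hp
    simpa using mul_self_pos.mpr ha
  · exact add_pos_of_pos_of_nonneg (pow_pos (norm_pos_iff.mpr hX) 2) (mul_self_nonneg a)

section lmulCorTwo

variable {h : Type*} [NormedAddCommGroup h] [InnerProductSpace ℝ h]
  (c : h →ₗ[ℝ] h →ₗ[ℝ] h) (D : h →ₗ[ℝ] h)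

theorem lmulCorTwo_apply (p q : h × ℝ) :
    lmulCorTwo c D p q
      = (c p.1 q.1 + q.2 • p.1 + p.2 • (q.1 + D q.1), ⟪p.1, q.1⟫ + p.2 * q.2) := by
  simp [lmulCorTwo, smul_eq_mul]

theorem lmulCorTwo_leftSymmetric
    (hess : ∀ X Y Z : h, ⟪c X Y - c Y X, Z⟫ = ⟪c Y Z, X⟫ - ⟪c X Z, Y⟫)
    (hass : ∀ X Y Z : h,
      (c (c X Y) Z - c X (c Y Z)) - (c (c Y X) Z - c Y (c X Z))
        = ⟪Y, Z⟫ • X - ⟪X, Z⟫ • Y)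
    (hD : ∀ X Y : h, ⟪D X, Y⟫ = -⟪D Y, X⟫)
    (hDer : ∀ X Y : h, D (c X Y) = c (D X) Y + c X (D Y)) (p q r : h × ℝ) :
    lmulCorTwo c D (lmulCorTwo c D p q) r - lmulCorTwo c D p (lmulCorTwo c D q r)
      = lmulCorTwo c D (lmulCorTwo c D q p) r - lmulCorTwo c D q (lmulCorTwo c D p r) := by
  obtain ⟨X, a⟩ := p
  obtain ⟨Y, b⟩ := q
  obtain ⟨Z, e⟩ := r
  simp only [lmulCorTwo_apply, Prod.mk_sub_mk, Prod.mk.injEq]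
  constructor
  · simp only [map_add, map_smul, smul_add, LinearMap.add_apply, LinearMap.smul_apply, hDer,
      real_inner_comm Y X]
    linear_combination (norm := module) hass X Y Z
  · have comm_c (u v w : h) : ⟪u, c v w⟫ = ⟪c v w, u⟫ := real_inner_comm _ u
    have comm_D (u v : h) : ⟪u, D v⟫ = ⟪D v, u⟫ := real_inner_comm _ u
    simp only [inner_add_left, inner_add_right, real_inner_smul_left, real_inner_smul_right,
      comm_c, comm_D, real_inner_comm Y X]
    linear_combination (inner_sub_left _ _ Z).symm.trans (hess X Y Z) + a * hD Y Z - b * hD X Z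

variable [FiniteDimensional ℝ h]

theorem trace_lmulCorTwo (htr : ∀ X : h, LinearMap.trace ℝ h (c X) = 0)
    (hD : ∀ X Y : h, ⟪D X, Y⟫ = -⟪D Y, X⟫) (p : h × ℝ) :
    LinearMap.trace ℝ (h × ℝ) (lmulCorTwo c D p) = p.2 * (Module.finrank ℝ h + 1) := by
  have hDtr : LinearMap.trace ℝ h D = 0 :=
    LinearMap.trace_eq_zero_of_inner_map_self_eq_zero fun x ↦ by
      linarith [hD x x, real_inner_comm x (D x)]
  have hblock₁ : LinearMap.fst ℝ h ℝ ∘ₗ lmulCorTwo c D p ∘ₗ LinearMap.inl ℝ h ℝ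
      = c p.1 + p.2 • (LinearMap.id + D) := by
    ext; simp [lmulCorTwo]
  have hblock₂ : LinearMap.snd ℝ h ℝ ∘ₗ lmulCorTwo c D p ∘ₗ LinearMap.inr ℝ h ℝ
      = p.2 • LinearMap.id := by
    ext; simp [lmulCorTwo]
  rw [LinearMap.trace_prod_eq_add, hblock₁, hblock₂]
  simp only [map_add, map_smul, htr, hDtr, LinearMap.trace_id, Module.finrank_self,
    smul_eq_mul, Nat.cast_one]
  ring

theorem trace_lmulCorTwo_lmulCorTwo (htr : ∀ X : h, LinearMap.trace ℝ h (c X) = 0)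
    (hD : ∀ X Y : h, ⟪D X, Y⟫ = -⟪D Y, X⟫) (p q : h × ℝ) :
    LinearMap.trace ℝ (h × ℝ) (lmulCorTwo c D (lmulCorTwo c D p q))
      = (Module.finrank ℝ h + 1) * (⟪p.1, q.1⟫ + p.2 * q.2) := by
  rw [trace_lmulCorTwo c D htr hD, lmulCorTwo_apply, mul_comm]

end lmulCorTwo

/-- Let `(h, ∘, ⟨,⟩)` be an `n`-dimensional real `1`-Hessian algebra with all
left multiplications trace-free and `D` a skew-symmetric derivation of
`(h, ∘)`. The product on `g = h ⊕ ℝH` given by `X•Y = X∘Y + ⟨X,Y⟩H`,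
`H•X = X + D X`, `X•H = X`, `H•H = H` is left symmetric and its Koszul
form is `(n+1)⟨,⟩` on `h`, `0` on `h × ℝH` and `n+1` on `H`; in particular
it is positive definite. -/
theorem corollary_ex_two (h : Type*) [NormedAddCommGroup h]
    [InnerProductSpace ℝ h] [FiniteDimensional ℝ h]
    (n : ℕ) (hn : Module.finrank ℝ h = n)
    (c : h →ₗ[ℝ] h →ₗ[ℝ] h)
    (hess : ∀ X Y Z : h, ⟪c X Y - c Y X, Z⟫ = ⟪c Y Z, X⟫ - ⟪c X Z, Y⟫)
    (hass : ∀ X Y Z : h,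
      (c (c X Y) Z - c X (c Y Z)) - (c (c Y X) Z - c Y (c X Z))
        = ⟪Y, Z⟫ • X - ⟪X, Z⟫ • Y)
    (htr : ∀ X : h, LinearMap.trace ℝ h (c X) = 0)
    (D : h →ₗ[ℝ] h) (hD : ∀ X Y : h, ⟪D X, Y⟫ = -⟪D Y, X⟫)
    (hDer : ∀ X Y : h, D (c X Y) = c (D X) Y + c X (D Y)) :
    (∀ p q : h × ℝ, lmulCorTwo c D p q
      = (c p.1 q.1 + q.2 • p.1 + p.2 • (q.1 + D q.1),
          ⟪p.1, q.1⟫ + p.2 * q.2)) ∧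
    (∀ p q r : h × ℝ,
      lmulCorTwo c D (lmulCorTwo c D p q) r
          - lmulCorTwo c D p (lmulCorTwo c D q r)
        = lmulCorTwo c D (lmulCorTwo c D q p) r
          - lmulCorTwo c D q (lmulCorTwo c D p r)) ∧
    (∀ X Y : h, LinearMap.trace ℝ (h × ℝ)
        (lmulCorTwo c D (lmulCorTwo c D (X, 0) (Y, 0)))
      = ((n : ℝ) + 1) * ⟪X, Y⟫) ∧
    (∀ X : h, LinearMap.trace ℝ (h × ℝ)
        (lmulCorTwo c D (lmulCorTwo c D (X, 0) ((0 : h), (1 : ℝ)))) = 0) ∧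
    (LinearMap.trace ℝ (h × ℝ)
        (lmulCorTwo c D (lmulCorTwo c D ((0 : h), (1 : ℝ)) ((0 : h), (1 : ℝ))))
      = (n : ℝ) + 1) ∧
    (∀ p : h × ℝ, p ≠ 0 →
      0 < LinearMap.trace ℝ (h × ℝ)
        (lmulCorTwo c D (lmulCorTwo c D p p))) := by
  have koszul := trace_lmulCorTwo_lmulCorTwo c D htr hD
  rw [hn] at koszul
  refine ⟨lmulCorTwo_apply c D, lmulCorTwo_leftSymmetric c D hess hass hD hDer,
    fun X Y ↦ by simp [koszul], fun X ↦ by simp [koszul], by simp [koszul],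
    fun p hp ↦ ?_⟩
  rw [koszul]
  exact mul_pos (by positivity) (inner_self_add_mul_self_pos hp)
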